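/- For a ≥ 1 and m ≥ 1, let Q be the 2×2 matrix m·[[2,a],[a,−2]], and let M = [[a_{2n−1}, a_{2n}],[a_{2n}, a_{2n+1}]] where n is a positive integer. Then (M + I)·Q^{−1} has all entries in ℤ if and only if n is odd and m divides a_n. -/

import Mathlib

/-!
The matrix `[[a_{2n-1}, a_{2n}], [a_{2n}, a_{2n+1}]]` is `N²`, where
`N = [[a_{n-1}, a_n], [a_n, a_{n+1}]]` is the `n`-th power of the companion matrix
`[[0, 1], [1, a]]`; in particular `det N = (-1)^n` (Cassini). Writing `S = [[2, a], [a, -2]]`,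
we have `S² = (a² + 4) I`, so `Q⁻¹ = S / (m (a² + 4))`, and
`(N² + I) S = (a² + 4) a_n [[a_n, -a_{n-1}], [a_{n+1}, -a_n]] + (1 + det N) S`.
For even `n` the top left entry is `4` modulo `a² + 4 > 4`, so it is never divisible by
`m (a² + 4)`. For odd `n` the second summand vanishes, and integrality says that `m` divides
`a_n a_n`, `a_n a_{n-1}` and `a_n a_{n+1}`, which by Cassini happens exactly when `m ∣ a_n`.
-/

section Recurrence

variable {R : Type*} [CommRing R] {a : R} {f : ℕ → R}

theorem companion_pow_succ (h0 : f 0 = 0) (h1 : f 1 = 1)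
    (hrec : ∀ n, f (n + 2) = a * f (n + 1) + f n) (n : ℕ) :
    !![0, 1; 1, a] ^ (n + 1) = !![f n, f (n + 1); f (n + 1), f (n + 2)] := by
  induction n with
  | zero => simp [hrec 0, h0, h1]
  | succ n ih =>
    rw [pow_succ, ih, Matrix.mul_fin_two, hrec (n + 1), hrec n]
    simp [add_comm, mul_comm]

theorem companion_pow (h0 : f 0 = 0) (h1 : f 1 = 1)
    (hrec : ∀ n, f (n + 2) = a * f (n + 1) + f n) {n : ℕ} (hn : 0 < n) :
    !![0, 1; 1, a] ^ n = !![f (n - 1), f n; f n, f (n + 1)] := by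
  obtain ⟨k, rfl⟩ := Nat.exists_eq_add_of_lt hn
  simpa using companion_pow_succ h0 h1 hrec k

theorem cassini (h0 : f 0 = 0) (h1 : f 1 = 1)
    (hrec : ∀ n, f (n + 2) = a * f (n + 1) + f n) {n : ℕ} (hn : 0 < n) :
    f (n - 1) * f (n + 1) - f n ^ 2 = (-1) ^ n := by
  have := congrArg Matrix.det (companion_pow h0 h1 hrec hn)
  simpa [Matrix.det_pow, Matrix.det_fin_two_of, sq] using this.symm

end Recurrence

theorem sq_add_one_mul_eq {R : Type*} [CommRing R] {a p q r : R} (hr : r = a * q + p) :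
    (!![p, q; q, r] ^ 2 + 1) * !![2, a; a, -2] =
      ((a ^ 2 + 4) * q) • !![q, -p; r, -q] + (1 + (p * r - q ^ 2)) • !![2, a; a, -2] := by
  subst hr
  ext i j
  fin_cases i <;> fin_cases j <;> simp [sq, Matrix.mul_apply, Matrix.one_apply] <;> ring

theorem Matrix.inv_smul_eq_of_mul_self {K n : Type*} [Field K] [Fintype n] [DecidableEq n]
    {S : Matrix n n K} {c d : K} (hS : S * S = d • 1) (hcd : c * d ≠ 0) :
    (c • S)⁻¹ = (c * d)⁻¹ • S := by
  apply Matrix.inv_eq_right_inv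
  rw [Matrix.smul_mul, Matrix.mul_smul, hS, smul_smul, smul_smul, mul_right_comm,
    mul_inv_cancel₀ hcd, one_smul]

theorem exists_int_eq_inv_mul_iff {D x : ℤ} (hD : D ≠ 0) :
    (∃ z : ℤ, (D : ℚ)⁻¹ * x = z) ↔ D ∣ x := by
  have hDq : (D : ℚ) ≠ 0 := Int.cast_ne_zero.mpr hD
  constructor
  · rintro ⟨z, hz⟩
    refine ⟨z, Int.cast_injective (α := ℚ) ?_⟩
    rw [inv_mul_eq_iff_eq_mul₀ hDq] at hz
    push_cast
    exact hz
  · rintro ⟨z, rfl⟩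
    exact ⟨z, by push_cast; rw [inv_mul_cancel_left₀ hDq]⟩

theorem forall_exists_int_entries_iff {a m : ℤ} (hD : m * (a ^ 2 + 4) ≠ 0)
    (M : Matrix (Fin 2) (Fin 2) ℤ) :
    (∀ i j, ∃ z : ℤ, ((M.map (Int.cast : ℤ → ℚ) + 1) *
        ((m : ℚ) • !![2, (a : ℚ); (a : ℚ), -2])⁻¹) i j = z) ↔
      ∀ i j, m * (a ^ 2 + 4) ∣ ((M + 1) * !![2, a; a, -2]) i j := by
  have hS : !![2, (a : ℚ); (a : ℚ), -2] * !![2, (a : ℚ); (a : ℚ), -2] =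
      ((a : ℚ) ^ 2 + 4) • 1 := by
    ext i j
    fin_cases i <;> fin_cases j <;> simp [Matrix.mul_apply] <;> ring
  have hcast : (M.map (Int.cast : ℤ → ℚ) + 1) * !![2, (a : ℚ); (a : ℚ), -2] =
      ((M + 1) * !![2, a; a, -2]).map Int.cast := by
    ext i j
    fin_cases i <;> fin_cases j <;> simp [Matrix.mul_apply, Matrix.one_apply]
  rw [Matrix.inv_smul_eq_of_mul_self hS (by exact_mod_cast hD), Matrix.mul_smul, hcast]
  simp_rw [Matrix.smul_apply, Matrix.map_apply, smul_eq_mul]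
  exact_mod_cast forall_congr' fun i => forall_congr' fun j => exists_int_eq_inv_mul_iff hD

theorem forall_dvd_smul_entries_iff {c m p q r : ℤ} (hc : c ≠ 0) (hpqr : p * r - q ^ 2 = -1) :
    (∀ i j, m * c ∣ ((c * q) • !![q, -p; r, -q]) i j) ↔ m ∣ q := by
  simp only [Fin.forall_fin_two, Matrix.smul_apply, Matrix.of_apply, Matrix.cons_val',
    Matrix.cons_val_zero, Matrix.cons_val_one, Matrix.empty_val', Matrix.cons_val_fin_one,
    smul_eq_mul, mul_neg, dvd_neg, mul_assoc, mul_comm m c, mul_dvd_mul_iff_left hc]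
  constructor
  · rintro ⟨⟨hqq, hqp⟩, -⟩
    have hq : q = q * q * q - q * p * r := by linear_combination q * hpqr
    rw [hq]
    exact dvd_sub (hqq.mul_right q) (hqp.mul_right r)
  · intro h
    exact ⟨⟨h.mul_right q, h.mul_right p⟩, h.mul_right r, h.mul_right q⟩

theorem integrality_criterion_antisymplectic (a m : ℤ) (ha : 1 ≤ a) (hm : 1 ≤ m)
    (f : ℕ → ℤ) (h0 : f 0 = 0) (h1 : f 1 = 1)
    (hrec : ∀ n, f (n + 2) = a * f (n + 1) + f n) (n : ℕ) (hn : 0 < n) :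
    (∀ i j : Fin 2,
        ∃ z : ℤ,
          (((!![(f (2 * n - 1) : ℚ), (f (2 * n) : ℚ);
                (f (2 * n) : ℚ), (f (2 * n + 1) : ℚ)] + 1) *
              ((m : ℚ) • !![2, (a : ℚ); (a : ℚ), -2])⁻¹) i j) = (z : ℚ)) ↔
      (Odd n ∧ m ∣ f n) := by
  have hc : a ^ 2 + 4 ≠ 0 := by positivity
  have hM : !![(f (2 * n - 1) : ℚ), (f (2 * n) : ℚ); (f (2 * n) : ℚ), (f (2 * n + 1) : ℚ)] =
      (!![f (n - 1), f n; f n, f (n + 1)] ^ 2).map Int.cast := by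
    rw [← companion_pow h0 h1 hrec hn, ← pow_mul, mul_comm,
      companion_pow h0 h1 hrec (by omega)]
    ext i j
    fin_cases i <;> fin_cases j <;> rfl
  have hr : f (n + 1) = a * f n + f (n - 1) := by
    obtain ⟨k, rfl⟩ := Nat.exists_eq_add_of_lt hn
    simpa using hrec k
  have hcas := cassini h0 h1 hrec hn
  rw [hM, forall_exists_int_entries_iff (by positivity), sq_add_one_mul_eq hr, hcas]
  rcases n.even_or_odd with heven | hodd
  · simp only [heven.neg_one_pow, Nat.not_odd_iff_even.mpr heven, false_and, iff_false]
    intro h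
    have h00 : a ^ 2 + 4 ∣ (a ^ 2 + 4) * (f n * f n) + 4 := by
      simpa [mul_assoc] using dvd_trans (dvd_mul_left _ m) (h 0 0)
    have h4 : a ^ 2 + 4 ≤ 4 :=
      Int.le_of_dvd (by norm_num) ((dvd_add_right (dvd_mul_right _ _)).mp h00)
    nlinarith
  · simp only [hodd.neg_one_pow, add_neg_cancel, zero_smul, add_zero, hodd, true_and]
    exact forall_dvd_smul_entries_iff hc (hcas.trans hodd.neg_one_pow)
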